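/- Let f be a C¹ self-map of [-1,1], strictly increasing on [-1,0], strictly decreasing on [0,1], with f(0) = 1, f(−1) = f(1) = −1, having power law |x|^γ at the critical point 0 for some γ > 1, and let f̃ = h_γ ∘ f ∘ h_γ^{−1}. Then the sequence of nested partitions determined by f decreases exponentially if and only if the sequence of nested partitions determined by f̃ decreases exponentially. -/

import Mathlib

open Set MeasureTheory Filter Topology

noncomputable def len (s : Set ℝ) : ℝ := (volume s).toReal

noncomputable def branch (f : ℝ → ℝ) : Bool → ℝ → ℝ
  | false => Function.invFunOn f (Icc (-1) 0)
  | true => Function.invFunOn f (Icc 0 1)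

noncomputable def gw (f : ℝ → ℝ) : List Bool → ℝ → ℝ
  | [] => id
  | b :: w => branch f b ∘ gw f w

noncomputable def Iw (f : ℝ → ℝ) (w : List Bool) : Set ℝ := gw f w '' Icc (-1) 1

def word (a : ℕ → Bool) (n : ℕ) : List Bool := ((List.range (n + 1)).reverse).map a

noncomputable def ratio (f : ℝ → ℝ) (a : ℕ → Bool) (n : ℕ) : ℝ :=
  len (Iw f (word a n)) / len (Iw f ((word a n).dropLast))

def IsScalingFun (f : ℝ → ℝ) (s : (ℕ → Bool) → ℝ) : Prop :=
  ∀ a : ℕ → Bool, Tendsto (ratio f a) atTop (nhds (s a))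

def HolderOnDual (s : (ℕ → Bool) → ℝ) : Prop :=
  ∃ C > (0:ℝ), ∃ lam ∈ Ioo (0:ℝ) 1, ∀ a b : ℕ → Bool, ∀ n : ℕ,
    (∀ k < n, a k = b k) → |s a - s b| ≤ C * lam ^ n

def EvZero (a : ℕ → Bool) : Prop := ∃ N, ∀ n ≥ N, a n = false

def Lambda (f : ℝ → ℝ) : Set ℝ := {x | ∀ n : ℕ, f^[n] x ∈ Icc (-1) 1}

structure GoodFamily where
  eps0 : ℝ
  eps0_pos : 0 < eps0
  f : ℝ → ℝ → ℝ
  f' : ℝ → ℝ → ℝ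
  gamma : ℝ
  one_lt_gamma : 1 < gamma
  mono : ∀ ε ∈ Icc 0 eps0, StrictMonoOn (f ε) (Icc (-1) 0)
  anti : ∀ ε ∈ Icc 0 eps0, StrictAntiOn (f ε) (Icc 0 1)
  map_neg_one : ∀ ε ∈ Icc 0 eps0, f ε (-1) = -1
  map_one : ∀ ε ∈ Icc 0 eps0, f ε 1 = -1
  map_zero : ∀ ε ∈ Icc 0 eps0, f ε 0 = 1 + ε
  smooth : ContDiffOn ℝ 1 (fun p : ℝ × ℝ => f p.1 p.2) (Icc 0 eps0 ×ˢ Icc (-1) 1)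
  deriv_f : ∀ ε ∈ Icc 0 eps0, ∀ x ∈ Icc (-1:ℝ) 1,
    HasDerivWithinAt (f ε) (f' ε x) (Icc (-1) 1) x
  Rneg : ℝ → ℝ → ℝ
  Rpos : ℝ → ℝ → ℝ
  Rneg_cont : ContinuousOn (fun p : ℝ × ℝ => Rneg p.1 p.2) (Icc 0 eps0 ×ˢ Icc (-1) 0)
  Rpos_cont : ContinuousOn (fun p : ℝ × ℝ => Rpos p.1 p.2) (Icc 0 eps0 ×ˢ Icc 0 1)
  Rneg_ne : ∀ ε ∈ Icc 0 eps0, ∀ x ∈ Icc (-1:ℝ) 0, Rneg ε x ≠ 0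
  Rpos_ne : ∀ ε ∈ Icc 0 eps0, ∀ x ∈ Icc (0:ℝ) 1, Rpos ε x ≠ 0
  Rneg_eq : ∀ ε ∈ Icc 0 eps0, ∀ x ∈ Ico (-1:ℝ) 0, Rneg ε x = f' ε x / |x| ^ (gamma - 1)
  Rpos_eq : ∀ ε ∈ Icc 0 eps0, ∀ x ∈ Ioc (0:ℝ) 1, Rpos ε x = f' ε x / |x| ^ (gamma - 1)
  K' : ℝ
  K'_pos : 0 < K'
  alpha' : ℝ
  alpha'_mem : alpha' ∈ Ioc (0:ℝ) 1
  holder' : ∀ ε ∈ Icc 0 eps0, ∀ x ∈ Icc (-1:ℝ) 1, ∀ y ∈ Icc (-1:ℝ) 1,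
    |f' ε x - f' ε y| ≤ K' * |x - y| ^ alpha'
  K'' : ℝ
  K''_pos : 0 < K''
  alpha'' : ℝ
  alpha''_mem : alpha'' ∈ Ioc (0:ℝ) 1
  holder''_neg : ∀ ε ∈ Icc 0 eps0, ∀ x ∈ Ico (-1:ℝ) 0, ∀ y ∈ Ico (-1:ℝ) 0,
    |f' ε x / |x| ^ (gamma - 1) - f' ε y / |y| ^ (gamma - 1)| ≤ K'' * |x - y| ^ alpha''
  holder''_pos : ∀ ε ∈ Icc 0 eps0, ∀ x ∈ Ioc (0:ℝ) 1, ∀ y ∈ Ioc (0:ℝ) 1,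
    |f' ε x / |x| ^ (gamma - 1) - f' ε y / |y| ^ (gamma - 1)| ≤ K'' * |x - y| ^ alpha''
  C0 : ℝ
  C0_pos : 0 < C0
  lam : ℝ
  lam_mem : lam ∈ Ioo (0:ℝ) 1
  decay : ∀ ε ∈ Icc 0 eps0, ∀ n : ℕ, 1 ≤ n → ∀ w : List Bool, w.length = n + 1 →
    len (Iw (f ε) w) ≤ C0 * lam ^ n

/-- The change of coordinate `h_γ` associated to the singular metric
`dy = dx/(1-x²)^{(γ-1)/γ}` on `[-1,1]`. -/
noncomputable def hgam (γ : ℝ) (x : ℝ) : ℝ :=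
  -1 + (2 / ∫ t in (-1:ℝ)..1, ((1 - t ^ 2) ^ ((γ - 1) / γ))⁻¹) *
    ∫ t in (-1:ℝ)..x, ((1 - t ^ 2) ^ ((γ - 1) / γ))⁻¹

/-- The inverse of `h_γ` on `[-1,1]`. -/
noncomputable def hgamInv (γ : ℝ) : ℝ → ℝ := Function.invFunOn (hgam γ) (Icc (-1) 1)

/-- `f̃ = h_γ ∘ f ∘ h_γ⁻¹`. -/
noncomputable def tildeF (γ : ℝ) (f : ℝ → ℝ) : ℝ → ℝ := hgam γ ∘ f ∘ hgamInv γ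


/-! The density `(1 - t²)^(-(γ-1)/γ)` of `h_γ` is at least `1` and at most
`(1 - t)^(-(γ-1)/γ) + (1 + t)^(-(γ-1)/γ)`, whose primitive is `1/γ`-Hölder; hence
`c (y - x) ≤ h_γ y - h_γ x ≤ K (y - x)^(1/γ)` on `[-1,1]`. Since `h_γ` is an increasing bijection
of `[-1,1]` fixing `0`, it carries the inverse branches of `f` to those of `f̃`, so each interval of
the partitions of `f̃` is the `h_γ`-image of the interval of `f` with the same address. Exponential
decay therefore passes from `f` to `f̃` with rate `λ^(1/γ)`, and back with rate `λ`. -/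

open Function

section InvFunOn

variable {α β : Type*} [ConditionallyCompleteLinearOrder α] [TopologicalSpace α] [OrderTopology α]
  [DenselyOrdered α] [Nonempty α] [LinearOrder β] [TopologicalSpace β] [OrderClosedTopology β]
  {f : α → β} {s : Set α} {a b : β}

theorem StrictMonoOn.image_invFunOn_Icc (hf : StrictMonoOn f s) (hfc : ContinuousOn f s)
    (hs : s.OrdConnected) (hab : a ≤ b) (ha : a ∈ f '' s) (hb : b ∈ f '' s) :
    invFunOn f s '' Icc a b = Icc (invFunOn f s a) (invFunOn f s b) := by
  set c := invFunOn f s a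
  set d := invFunOn f s b
  have hc : c ∈ s := invFunOn_mem ha
  have hd : d ∈ s := invFunOn_mem hb
  have hfc' : f c = a := invFunOn_eq ha
  have hfd : f d = b := invFunOn_eq hb
  have hcd : c ≤ d := (hf.le_iff_le hc hd).1 (by rwa [hfc', hfd])
  have hsub : Icc c d ⊆ s := hs.out hc hd
  have himage : f '' Icc c d = Icc a b := by
    rw [(hfc.mono hsub).image_Icc_of_monotoneOn hcd (hf.monotoneOn.mono hsub), hfc', hfd]
  rw [← himage, hf.injOn.invFunOn_image hsub]

theorem StrictAntiOn.image_invFunOn_Icc (hf : StrictAntiOn f s) (hfc : ContinuousOn f s)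
    (hs : s.OrdConnected) (hab : a ≤ b) (ha : a ∈ f '' s) (hb : b ∈ f '' s) :
    invFunOn f s '' Icc a b = Icc (invFunOn f s b) (invFunOn f s a) := by
  set c := invFunOn f s a
  set d := invFunOn f s b
  have hc : c ∈ s := invFunOn_mem ha
  have hd : d ∈ s := invFunOn_mem hb
  have hfc' : f c = a := invFunOn_eq ha
  have hfd : f d = b := invFunOn_eq hb
  have hdc : d ≤ c := (hf.le_iff_ge hc hd).1 (by rwa [hfc', hfd])
  have hsub : Icc d c ⊆ s := hs.out hd hc
  have himage : f '' Icc d c = Icc a b := by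
    rw [(hfc.mono hsub).image_Icc_of_antitoneOn hdc (hf.antitoneOn.mono hsub), hfc', hfd]
  rw [← himage, hf.injOn.invFunOn_image hsub]

end InvFunOn

def half : Bool → Set ℝ
  | false => Icc (-1) 0
  | true => Icc 0 1

lemma branch_eq_invFunOn (f : ℝ → ℝ) (i : Bool) : branch f i = invFunOn f (half i) := by
  cases i <;> rfl

lemma half_subset (i : Bool) : half i ⊆ Icc (-1) 1 := by
  cases i <;> exact Icc_subset_Icc (by norm_num) (by norm_num)

lemma ordConnected_half (i : Bool) : (half i).OrdConnected := by
  cases i <;> exact ordConnected_Icc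

structure IsUnimodal (f : ℝ → ℝ) : Prop where
  continuousOn : ContinuousOn f (Icc (-1) 1)
  strictMonoOn : StrictMonoOn f (Icc (-1) 0)
  strictAntiOn : StrictAntiOn f (Icc 0 1)
  map_neg_one : f (-1) = -1
  map_zero : f 0 = 1
  map_one : f 1 = -1

namespace IsUnimodal

variable {f : ℝ → ℝ}

lemma continuousOn_half (hf : IsUnimodal f) (i : Bool) : ContinuousOn f (half i) :=
  hf.continuousOn.mono (half_subset i)

lemma injOn_half (hf : IsUnimodal f) (i : Bool) : InjOn f (half i) := by
  cases i
  exacts [hf.strictMonoOn.injOn, hf.strictAntiOn.injOn]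

lemma image_half (hf : IsUnimodal f) (i : Bool) : f '' half i = Icc (-1) 1 := by
  cases i
  · rw [half, (hf.continuousOn_half false).image_Icc_of_monotoneOn (by norm_num)
      hf.strictMonoOn.monotoneOn, hf.map_neg_one, hf.map_zero]
  · rw [half, (hf.continuousOn_half true).image_Icc_of_antitoneOn (by norm_num)
      hf.strictAntiOn.antitoneOn, hf.map_one, hf.map_zero]

lemma mapsTo_half (hf : IsUnimodal f) (i : Bool) : MapsTo f (half i) (Icc (-1) 1) :=
  fun _ hx ↦ hf.image_half i ▸ mem_image_of_mem f hx

lemma surjOn_half (hf : IsUnimodal f) (i : Bool) : SurjOn f (half i) (Icc (-1) 1) :=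
  (hf.image_half i).ge

lemma mapsTo_branch (hf : IsUnimodal f) (i : Bool) : MapsTo (branch f i) (Icc (-1) 1) (half i) := by
  rw [branch_eq_invFunOn]
  exact (hf.surjOn_half i).mapsTo_invFunOn

lemma mapsTo_gw (hf : IsUnimodal f) (w : List Bool) :
    MapsTo (gw f w) (Icc (-1) 1) (Icc (-1) 1) := by
  induction w with
  | nil => exact mapsTo_id _
  | cons i w ih => exact ((hf.mapsTo_branch i).mono_right (half_subset i)).comp ih

lemma Iw_subset (hf : IsUnimodal f) (w : List Bool) : Iw f w ⊆ Icc (-1) 1 :=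
  (hf.mapsTo_gw w).image_subset

lemma image_branch_Icc (hf : IsUnimodal f) (i : Bool) {a b : ℝ} (hab : a ≤ b)
    (hsub : Icc a b ⊆ Icc (-1) 1) :
    ∃ c d, branch f i '' Icc a b = Icc c d := by
  have ha : a ∈ f '' half i := hf.surjOn_half i (hsub (left_mem_Icc.2 hab))
  have hb : b ∈ f '' half i := hf.surjOn_half i (hsub (right_mem_Icc.2 hab))
  rw [branch_eq_invFunOn]
  cases i
  · exact ⟨_, _, hf.strictMonoOn.image_invFunOn_Icc (hf.continuousOn_half false)
      (ordConnected_half false) hab ha hb⟩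
  · exact ⟨_, _, hf.strictAntiOn.image_invFunOn_Icc (hf.continuousOn_half true)
      (ordConnected_half true) hab ha hb⟩

lemma exists_Iw_eq_Icc (hf : IsUnimodal f) (w : List Bool) : ∃ a b, a ≤ b ∧ Iw f w = Icc a b := by
  induction w with
  | nil => exact ⟨-1, 1, by norm_num, image_id _⟩
  | cons i w ih =>
    obtain ⟨a, b, hab, hw⟩ := ih
    have hcons : Iw f (i :: w) = branch f i '' Icc a b := by
      rw [← hw, Iw, Iw, gw, image_comp]
    obtain ⟨c, d, hcd⟩ := hf.image_branch_Icc i hab (hw ▸ hf.Iw_subset w)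
    refine ⟨c, d, nonempty_Icc.1 ?_, hcons.trans hcd⟩
    exact hcd ▸ (nonempty_Icc.2 hab).image _

end IsUnimodal

section Conjugation

variable {f h : ℝ → ℝ}

lemma apply_mem_half_iff (hh : StrictMonoOn h (Icc (-1) 1))
    (hh_image : h '' Icc (-1) 1 = Icc (-1) 1) (hh0 : h 0 = 0) {x : ℝ} (hx : x ∈ Icc (-1) 1)
    (i : Bool) : h x ∈ half i ↔ x ∈ half i := by
  have h0I : (0 : ℝ) ∈ Icc (-1) 1 := by norm_num
  have hhx : h x ∈ Icc (-1) 1 := hh_image ▸ mem_image_of_mem h hx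
  have hle : h x ≤ 0 ↔ x ≤ 0 := by rw [← hh.le_iff_le hx h0I, hh0]
  have hge : 0 ≤ h x ↔ 0 ≤ x := by rw [← hh.le_iff_le h0I hx, hh0]
  cases i <;> simp only [half, mem_Icc, hx.1, hx.2, hhx.1, hhx.2, hle, hge, true_and, and_true]

lemma branch_conj (hf : IsUnimodal f) (hh : StrictMonoOn h (Icc (-1) 1))
    (hh_image : h '' Icc (-1) 1 = Icc (-1) 1) (hh0 : h 0 = 0) (i : Bool) {y : ℝ}
    (hy : y ∈ Icc (-1) 1) :
    branch (h ∘ f ∘ invFunOn h (Icc (-1) 1)) i (h y) = h (branch f i y) := by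
  set k := invFunOn h (Icc (-1) 1)
  have hsurj : SurjOn h (Icc (-1) 1) (Icc (-1) 1) := hh_image.ge
  have hhk : RightInvOn k h (Icc (-1) 1) := hsurj.rightInvOn_invFunOn
  have hk_half : MapsTo k (half i) (half i) := fun z hz ↦ by
    have hkz := hsurj.mapsTo_invFunOn (half_subset i hz)
    rwa [← apply_mem_half_iff hh hh_image hh0 hkz, hhk (half_subset i hz)]
  have hinj : InjOn (h ∘ f ∘ k) (half i) :=
    hh.injOn.comp ((hf.injOn_half i).comp (hhk.injOn.mono (half_subset i)) hk_half)
      ((hf.mapsTo_half i).comp hk_half)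
  have hx : branch f i y ∈ half i := hf.mapsTo_branch i hy
  have hkh : k (h (branch f i y)) = branch f i y := hh.injOn.leftInvOn_invFunOn (half_subset i hx)
  have hfx : f (branch f i y) = y := by
    rw [branch_eq_invFunOn]
    exact (hf.surjOn_half i).rightInvOn_invFunOn hy
  have hconj : (h ∘ f ∘ k) (h (branch f i y)) = h y := by
    simp only [comp_apply, hkh, hfx]
  rw [branch_eq_invFunOn, ← hconj]
  exact hinj.leftInvOn_invFunOn
    ((apply_mem_half_iff hh hh_image hh0 (half_subset i hx) i).2 hx)

lemma gw_conj (hf : IsUnimodal f) (hh : StrictMonoOn h (Icc (-1) 1))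
    (hh_image : h '' Icc (-1) 1 = Icc (-1) 1) (hh0 : h 0 = 0) (w : List Bool) {y : ℝ}
    (hy : y ∈ Icc (-1) 1) :
    gw (h ∘ f ∘ invFunOn h (Icc (-1) 1)) w (h y) = h (gw f w y) := by
  induction w with
  | nil => rfl
  | cons i w ih =>
    simp only [gw, comp_apply, ih]
    exact branch_conj hf hh hh_image hh0 i (hf.mapsTo_gw w hy)

lemma Iw_conj (hf : IsUnimodal f) (hh : StrictMonoOn h (Icc (-1) 1))
    (hh_image : h '' Icc (-1) 1 = Icc (-1) 1) (hh0 : h 0 = 0) (w : List Bool) :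
    Iw (h ∘ f ∘ invFunOn h (Icc (-1) 1)) w = h '' Iw f w := by
  have hI : Iw (h ∘ f ∘ invFunOn h (Icc (-1) 1)) w =
      gw (h ∘ f ∘ invFunOn h (Icc (-1) 1)) w '' (h '' Icc (-1) 1) := by
    rw [hh_image]; rfl
  rw [hI, Iw, image_image, image_image]
  exact image_congr fun y hy ↦ gw_conj hf hh hh_image hh0 w hy

end Conjugation

lemma integral_rpow_le_sub_rpow {r a b : ℝ} (hr : -1 < r) (hr0 : r ≤ 0) (ha : 0 ≤ a)
    (hab : a ≤ b) : ∫ t in a..b, t ^ r ≤ (b - a) ^ (r + 1) / (r + 1) := by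
  have hr1 : 0 < r + 1 := by linarith
  have hsub := Real.rpow_add_le_add_rpow ha (sub_nonneg.2 hab) hr1.le (by linarith)
  rw [add_sub_cancel] at hsub
  rw [integral_rpow (Or.inl hr)]
  gcongr
  linarith

lemma intervalIntegrable_sub_rpow {r : ℝ} (hr : -1 < r) (c a b : ℝ) :
    IntervalIntegrable (fun t ↦ (c - t) ^ r) volume a b := by
  simpa using
    (intervalIntegral.intervalIntegrable_rpow' (a := c - a) (b := c - b) hr).comp_sub_left c

lemma intervalIntegrable_add_rpow {r : ℝ} (hr : -1 < r) (c a b : ℝ) :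
    IntervalIntegrable (fun t ↦ (c + t) ^ r) volume a b := by
  simpa using
    (intervalIntegral.intervalIntegrable_rpow' (a := c + a) (b := c + b) hr).comp_add_left c

noncomputable def hgamDensity (γ t : ℝ) : ℝ := ((1 - t ^ 2) ^ ((γ - 1) / γ))⁻¹

section HgamDensity

variable {γ : ℝ}

lemma hgamDensity_eq_mul (γ : ℝ) {t : ℝ} (ht : t ∈ Icc (-1) 1) :
    hgamDensity γ t = (1 - t) ^ (-((γ - 1) / γ)) * (1 + t) ^ (-((γ - 1) / γ)) := by
  have h₁ : 0 ≤ 1 - t := by linarith [ht.2]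
  have h₂ : 0 ≤ 1 + t := by linarith [ht.1]
  rw [hgamDensity, show 1 - t ^ 2 = (1 - t) * (1 + t) by ring, Real.mul_rpow h₁ h₂, mul_inv,
    Real.rpow_neg h₁, Real.rpow_neg h₂]

lemma sub_one_div_self_mem_Ioo (hγ : 1 < γ) : (γ - 1) / γ ∈ Ioo 0 1 :=
  ⟨div_pos (by linarith) (by linarith), (div_lt_one (by linarith)).2 (by linarith)⟩

lemma hgamDensity_nonneg (γ : ℝ) {t : ℝ} (ht : t ∈ Icc (-1) 1) : 0 ≤ hgamDensity γ t :=
  inv_nonneg.2 (Real.rpow_nonneg (by nlinarith [ht.1, ht.2]) _)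

lemma one_le_hgamDensity (hγ : 1 < γ) {t : ℝ} (ht : t ∈ Ioo (-1) 1) : 1 ≤ hgamDensity γ t := by
  have hpos : 0 < 1 - t ^ 2 := by nlinarith [ht.1, ht.2]
  exact (one_le_inv₀ (Real.rpow_pos_of_pos hpos _)).2
    (Real.rpow_le_one hpos.le (by nlinarith) (sub_one_div_self_mem_Ioo hγ).1.le)

lemma hgamDensity_le (hγ : 1 < γ) {t : ℝ} (ht : t ∈ Icc (-1) 1) :
    hgamDensity γ t ≤ (1 - t) ^ (-((γ - 1) / γ)) + (1 + t) ^ (-((γ - 1) / γ)) := by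
  have hp : -((γ - 1) / γ) ≤ 0 := neg_nonpos.2 (sub_one_div_self_mem_Ioo hγ).1.le
  have hu := Real.rpow_nonneg (show 0 ≤ 1 - t by linarith [ht.2]) (-((γ - 1) / γ))
  have hv := Real.rpow_nonneg (show 0 ≤ 1 + t by linarith [ht.1]) (-((γ - 1) / γ))
  rw [hgamDensity_eq_mul γ ht]
  rcases le_total t 0 with ht0 | ht0
  · have := Real.rpow_le_one_of_one_le_of_nonpos (show 1 ≤ 1 - t by linarith) hp
    nlinarith
  · have := Real.rpow_le_one_of_one_le_of_nonpos (show 1 ≤ 1 + t by linarith) hp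
    nlinarith

lemma intervalIntegrable_hgamDensity (hγ : 1 < γ) {x y : ℝ} (hx : x ∈ Icc (-1) 1)
    (hy : y ∈ Icc (-1) 1) : IntervalIntegrable (hgamDensity γ) volume x y := by
  have hr : -1 < -((γ - 1) / γ) := by linarith [(sub_one_div_self_mem_Ioo hγ).2]
  have hmaj :=
    (intervalIntegrable_sub_rpow hr 1 (-1) 1).add (intervalIntegrable_add_rpow hr 1 (-1) 1)
  have hint : IntervalIntegrable (hgamDensity γ) volume (-1) 1 := by
    have hmeas : Measurable (hgamDensity γ) := by unfold hgamDensity; fun_prop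
    refine hmaj.mono_fun' hmeas.aestronglyMeasurable ?_
    refine (ae_restrict_iff' measurableSet_uIoc).2 (.of_forall fun t ht ↦ ?_)
    have htI : t ∈ Icc (-1) 1 := by
      rw [uIoc_of_le (by norm_num)] at ht
      exact Ioc_subset_Icc_self ht
    simpa only [Real.norm_of_nonneg (hgamDensity_nonneg γ htI)] using hgamDensity_le hγ htI
  exact hint.mono_set <|
    uIcc_subset_uIcc (by simpa [uIcc_of_le] using hx) (by simpa [uIcc_of_le] using hy)

end HgamDensity

section Hgam

variable {γ : ℝ}

lemma sub_le_integral_hgamDensity (hγ : 1 < γ) {x y : ℝ} (hx : -1 ≤ x) (hxy : x ≤ y)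
    (hy : y ≤ 1) : y - x ≤ ∫ t in x..y, hgamDensity γ t := by
  have hmono := intervalIntegral.integral_mono_on_of_le_Ioo hxy intervalIntegrable_const
    (intervalIntegrable_hgamDensity hγ ⟨hx, hxy.trans hy⟩ ⟨hx.trans hxy, hy⟩)
    fun t ht ↦ one_le_hgamDensity hγ ⟨hx.trans_lt ht.1, ht.2.trans_le hy⟩
  simpa using hmono

lemma integral_hgamDensity_le (hγ : 1 < γ) {x y : ℝ} (hx : -1 ≤ x) (hxy : x ≤ y) (hy : y ≤ 1) :
    ∫ t in x..y, hgamDensity γ t ≤ 2 * γ * (y - x) ^ (1 / γ) := by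
  have hr1 : -((γ - 1) / γ) + 1 = 1 / γ := by field_simp; ring
  set r := -((γ - 1) / γ)
  have hr : -1 < r := by linarith [(sub_one_div_self_mem_Ioo hγ).2]
  have hr0 : r ≤ 0 := neg_nonpos.2 (sub_one_div_self_mem_Ioo hγ).1.le
  calc ∫ t in x..y, hgamDensity γ t
      ≤ ∫ t in x..y, ((1 - t) ^ r + (1 + t) ^ r) :=
        intervalIntegral.integral_mono_on hxy
          (intervalIntegrable_hgamDensity hγ ⟨hx, hxy.trans hy⟩ ⟨hx.trans hxy, hy⟩)
          ((intervalIntegrable_sub_rpow hr 1 x y).add (intervalIntegrable_add_rpow hr 1 x y))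
          fun t ht ↦ hgamDensity_le hγ ⟨hx.trans ht.1, ht.2.trans hy⟩
    _ = (∫ s in (1 - y)..(1 - x), s ^ r) + ∫ s in (1 + x)..(1 + y), s ^ r := by
        rw [intervalIntegral.integral_add (intervalIntegrable_sub_rpow hr 1 x y)
          (intervalIntegrable_add_rpow hr 1 x y), intervalIntegral.integral_comp_sub_left
          (fun s ↦ s ^ r), intervalIntegral.integral_comp_add_left (fun s ↦ s ^ r)]
    _ ≤ (y - x) ^ (r + 1) / (r + 1) + (y - x) ^ (r + 1) / (r + 1) := by
        gcongr
        · simpa using integral_rpow_le_sub_rpow hr hr0 (by linarith) (by linarith : 1 - y ≤ 1 - x)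
        · simpa using integral_rpow_le_sub_rpow hr hr0 (by linarith) (by linarith : 1 + x ≤ 1 + y)
    _ = 2 * γ * (y - x) ^ (1 / γ) := by
        rw [hr1]; field_simp; ring

lemma two_le_integral_hgamDensity (hγ : 1 < γ) : 2 ≤ ∫ t in (-1 : ℝ)..1, hgamDensity γ t := by
  linarith [sub_le_integral_hgamDensity (γ := γ) hγ le_rfl (by norm_num : (-1 : ℝ) ≤ 1) le_rfl]

lemma hgam_eq (γ x : ℝ) : hgam γ x =
    -1 + (2 / ∫ t in (-1 : ℝ)..1, hgamDensity γ t) * ∫ t in (-1 : ℝ)..x, hgamDensity γ t :=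
  rfl

lemma hgam_sub (hγ : 1 < γ) {x y : ℝ} (hx : x ∈ Icc (-1) 1) (hy : y ∈ Icc (-1) 1) :
    hgam γ y - hgam γ x =
      (2 / ∫ t in (-1 : ℝ)..1, hgamDensity γ t) * ∫ t in x..y, hgamDensity γ t := by
  have h₁ : (-1 : ℝ) ∈ Icc (-1) 1 := by norm_num
  rw [hgam_eq, hgam_eq, ← intervalIntegral.integral_interval_sub_left
    (intervalIntegrable_hgamDensity hγ h₁ hy) (intervalIntegrable_hgamDensity hγ h₁ hx)]
  ring

lemma hgam_neg_one (γ : ℝ) : hgam γ (-1) = -1 := by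
  simp [hgam_eq]

lemma hgam_one (hγ : 1 < γ) : hgam γ 1 = 1 := by
  have := two_le_integral_hgamDensity hγ
  rw [hgam_eq]
  field_simp
  norm_num

lemma hgam_zero (hγ : 1 < γ) : hgam γ 0 = 0 := by
  have h₁ : (-1 : ℝ) ∈ Icc (-1) 1 := by norm_num
  have h₀ : (0 : ℝ) ∈ Icc (-1) 1 := by norm_num
  have hsymm : ∫ t in (0 : ℝ)..1, hgamDensity γ t = ∫ t in (-1 : ℝ)..0, hgamDensity γ t := by
    simpa [hgamDensity] using (intervalIntegral.integral_comp_neg (a := (-1 : ℝ)) (b := 0)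
      (hgamDensity γ)).symm
  have hsplit := intervalIntegral.integral_add_adjacent_intervals
    (intervalIntegrable_hgamDensity hγ h₁ h₀)
    (intervalIntegrable_hgamDensity hγ h₀ (by norm_num : (1 : ℝ) ∈ Icc (-1) 1))
  have hN : ∫ t in (-1 : ℝ)..1, hgamDensity γ t = 2 * ∫ t in (-1 : ℝ)..0, hgamDensity γ t := by
    rw [← hsplit, hsymm]; ring
  have hpos : 0 < ∫ t in (-1 : ℝ)..0, hgamDensity γ t := by
    linarith [two_le_integral_hgamDensity hγ]
  rw [hgam_eq, hN]
  field_simp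
  ring

lemma sub_le_mul_hgam_sub (hγ : 1 < γ) {x y : ℝ} (hx : -1 ≤ x) (hxy : x ≤ y) (hy : y ≤ 1) :
    y - x ≤ (∫ t in (-1 : ℝ)..1, hgamDensity γ t) / 2 * (hgam γ y - hgam γ x) := by
  have := two_le_integral_hgamDensity hγ
  rw [hgam_sub hγ ⟨hx, hxy.trans hy⟩ ⟨hx.trans hxy, hy⟩]
  calc y - x ≤ ∫ t in x..y, hgamDensity γ t := sub_le_integral_hgamDensity hγ hx hxy hy
    _ = _ := by field_simp

lemma hgam_sub_le (hγ : 1 < γ) {x y : ℝ} (hx : -1 ≤ x) (hxy : x ≤ y) (hy : y ≤ 1) :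
    hgam γ y - hgam γ x ≤
      (2 / ∫ t in (-1 : ℝ)..1, hgamDensity γ t) * (2 * γ) * (y - x) ^ (1 / γ) := by
  have := two_le_integral_hgamDensity hγ
  rw [hgam_sub hγ ⟨hx, hxy.trans hy⟩ ⟨hx.trans hxy, hy⟩, mul_assoc]
  gcongr
  exact integral_hgamDensity_le hγ hx hxy hy

lemma hgam_strictMonoOn (hγ : 1 < γ) : StrictMonoOn (hgam γ) (Icc (-1) 1) := by
  intro x hx y hy hxy
  have hc : 0 < (∫ t in (-1 : ℝ)..1, hgamDensity γ t) / 2 := by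
    linarith [two_le_integral_hgamDensity hγ]
  nlinarith [sub_le_mul_hgam_sub hγ hx.1 hxy.le hy.2]

lemma continuousOn_hgam (hγ : 1 < γ) : ContinuousOn (hgam γ) (Icc (-1) 1) := by
  have hprim := intervalIntegral.continuousOn_primitive_interval'
    (intervalIntegrable_hgamDensity (γ := γ) hγ (by norm_num : (-1 : ℝ) ∈ Icc (-1) 1)
      (by norm_num : (1 : ℝ) ∈ Icc (-1) 1))
    left_mem_uIcc
  rw [uIcc_of_le (by norm_num)] at hprim
  exact continuousOn_const.add (continuousOn_const.mul hprim)

lemma hgam_image_Icc (hγ : 1 < γ) {a b : ℝ} (ha : -1 ≤ a) (hab : a ≤ b) (hb : b ≤ 1) :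
    hgam γ '' Icc a b = Icc (hgam γ a) (hgam γ b) :=
  ((continuousOn_hgam hγ).mono (Icc_subset_Icc ha hb)).image_Icc_of_monotoneOn hab
    ((hgam_strictMonoOn hγ).monotoneOn.mono (Icc_subset_Icc ha hb))

lemma hgam_image_Icc_neg_one_one (hγ : 1 < γ) : hgam γ '' Icc (-1) 1 = Icc (-1) 1 := by
  rw [hgam_image_Icc hγ le_rfl (by norm_num) le_rfl, hgam_neg_one, hgam_one hγ]

end Hgam

def DecreasesExponentially (F : ℝ → ℝ) : Prop :=
  ∃ C > (0 : ℝ), ∃ lam ∈ Ioo (0 : ℝ) 1, ∀ n : ℕ, ∀ w : List Bool,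
    w.length = n + 1 → len (Iw F w) ≤ C * lam ^ n

lemma DecreasesExponentially.of_le_mul_rpow {F G : ℝ → ℝ} {K q : ℝ} (hK : 0 < K) (hq : 0 < q)
    (hle : ∀ w, len (Iw G w) ≤ K * len (Iw F w) ^ q) (hF : DecreasesExponentially F) :
    DecreasesExponentially G := by
  obtain ⟨C, hC, lam, hlam, hdec⟩ := hF
  refine ⟨K * C ^ q, by positivity, lam ^ q,
    ⟨Real.rpow_pos_of_pos hlam.1 q, Real.rpow_lt_one hlam.1.le hlam.2 hq⟩, fun n w hw ↦ ?_⟩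
  calc len (Iw G w) ≤ K * len (Iw F w) ^ q := hle w
    _ ≤ K * (C * lam ^ n) ^ q := by
        gcongr
        · exact ENNReal.toReal_nonneg
        · exact hdec n w hw
    _ = K * C ^ q * (lam ^ q) ^ n := by
        rw [Real.mul_rpow hC.le (pow_nonneg hlam.1.le n), ← Real.rpow_natCast, ← Real.rpow_natCast,
          ← Real.rpow_mul hlam.1.le, ← Real.rpow_mul hlam.1.le, mul_comm (n : ℝ), mul_assoc]

lemma len_Icc {a b : ℝ} (h : a ≤ b) : len (Icc a b) = b - a := by
  rw [len, Real.volume_Icc, ENNReal.toReal_ofReal (sub_nonneg.2 h)]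

section TildeF

variable {γ : ℝ} {f : ℝ → ℝ}

lemma exists_len_Iw_tildeF (hγ : 1 < γ) (hf : IsUnimodal f) (w : List Bool) :
    ∃ a b, -1 ≤ a ∧ a ≤ b ∧ b ≤ 1 ∧ len (Iw f w) = b - a ∧
      len (Iw (tildeF γ f) w) = hgam γ b - hgam γ a := by
  obtain ⟨a, b, hab, hw⟩ := hf.exists_Iw_eq_Icc w
  have hsub : Icc a b ⊆ Icc (-1) 1 := hw ▸ hf.Iw_subset w
  obtain ⟨ha, hb⟩ := (Icc_subset_Icc_iff hab).1 hsub
  have hconj : Iw (tildeF γ f) w = hgam γ '' Iw f w :=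
    Iw_conj hf (hgam_strictMonoOn hγ) (hgam_image_Icc_neg_one_one hγ) (hgam_zero hγ) w
  refine ⟨a, b, ha, hab, hb, by rw [hw, len_Icc hab], ?_⟩
  rw [hconj, hw, hgam_image_Icc hγ ha hab hb,
    len_Icc ((hgam_strictMonoOn hγ).monotoneOn ⟨ha, hab.trans hb⟩ ⟨ha.trans hab, hb⟩ hab)]

end TildeF

theorem partitions_decrease_exponentially_iff_general (γ : ℝ) (hγ : 1 < γ) (f fd : ℝ → ℝ)
    (hderiv : ∀ x ∈ Icc (-1:ℝ) 1, HasDerivWithinAt f (fd x) (Icc (-1) 1) x)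
    (hmono : StrictMonoOn f (Icc (-1) 0)) (hanti : StrictAntiOn f (Icc 0 1))
    (hf0 : f 0 = 1) (hfm1 : f (-1) = -1) (hf1 : f 1 = -1) :
    (∃ C > (0:ℝ), ∃ lam ∈ Ioo (0:ℝ) 1, ∀ n : ℕ, ∀ w : List Bool,
      w.length = n + 1 → len (Iw f w) ≤ C * lam ^ n) ↔
    (∃ C > (0:ℝ), ∃ lam ∈ Ioo (0:ℝ) 1, ∀ n : ℕ, ∀ w : List Bool,
      w.length = n + 1 → len (Iw (tildeF γ f) w) ≤ C * lam ^ n) := by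
  have hf : IsUnimodal f :=
    ⟨fun x hx ↦ (hderiv x hx).continuousWithinAt, hmono, hanti, hfm1, hf0, hf1⟩
  set N := ∫ t in (-1 : ℝ)..1, hgamDensity γ t
  have hN : 2 ≤ N := two_le_integral_hgamDensity hγ
  constructor
  · refine DecreasesExponentially.of_le_mul_rpow (K := 2 / N * (2 * γ)) (by positivity)
      (by positivity : 0 < 1 / γ) fun w ↦ ?_
    obtain ⟨a, b, ha, hab, hb, hlen, hlen'⟩ := exists_len_Iw_tildeF hγ hf w
    rw [hlen, hlen']
    exact hgam_sub_le hγ ha hab hb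
  · refine DecreasesExponentially.of_le_mul_rpow (K := N / 2) (by positivity) one_pos fun w ↦ ?_
    obtain ⟨a, b, ha, hab, hb, hlen, hlen'⟩ := exists_len_Iw_tildeF hγ hf w
    rw [hlen, hlen', Real.rpow_one]
    exact sub_le_mul_hgam_sub hγ ha hab hb

/-- Lemma 3: for a C¹ self-map `f` of `[-1,1]` with the standard shape and
power law `|x|^γ` at the critical point, the partitions determined by `f` decrease
exponentially iff the partitions determined by `f̃ = h_γ ∘ f ∘ h_γ⁻¹` decrease
exponentially. -/
theorem partitions_decrease_exponentially_iff (γ : ℝ) (hγ : 1 < γ) (f fd : ℝ → ℝ)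
    (hmaps : MapsTo f (Icc (-1) 1) (Icc (-1) 1))
    (hderiv : ∀ x ∈ Icc (-1:ℝ) 1, HasDerivWithinAt f (fd x) (Icc (-1) 1) x)
    (hfd_cont : ContinuousOn fd (Icc (-1) 1))
    (hmono : StrictMonoOn f (Icc (-1) 0)) (hanti : StrictAntiOn f (Icc 0 1))
    (hf0 : f 0 = 1) (hfm1 : f (-1) = -1) (hf1 : f 1 = -1)
    (hpow_left : ∃ A : ℝ, A ≠ 0 ∧
      Tendsto (fun x => fd x / |x| ^ (γ - 1)) (nhdsWithin 0 (Iio 0)) (nhds A))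
    (hpow_right : ∃ B : ℝ, B ≠ 0 ∧
      Tendsto (fun x => fd x / |x| ^ (γ - 1)) (nhdsWithin 0 (Ioi 0)) (nhds B)) :
    (∃ C > (0:ℝ), ∃ lam ∈ Ioo (0:ℝ) 1, ∀ n : ℕ, ∀ w : List Bool,
      w.length = n + 1 → len (Iw f w) ≤ C * lam ^ n) ↔
    (∃ C > (0:ℝ), ∃ lam ∈ Ioo (0:ℝ) 1, ∀ n : ℕ, ∀ w : List Bool,
      w.length = n + 1 → len (Iw (tildeF γ f) w) ≤ C * lam ^ n) :=
  partitions_decrease_exponentially_iff_general γ hγ f fd hderiv hmono hanti hf0 hfm1 hf1
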